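/- arXiv:2512.05260 — 11 statements merged into one kernel-verified Lean document; each statement's English description precedes it below -/
import Mathlib

section
/- For all integers p ≥ 1, the sum over j = 0 to p-1 of binom(2p+1, 2j+1) · 2^{2p-2j} · B_{2p-2j} equals 2p, where B_n denotes the n-th Bernoulli number. -/
/-!
With `B(t) = t / (e^t - 1)` one has `B(2t) (e^t + 1) = 2 B(t)`, since `e^{2t} - 1 = (e^t + 1)(e^t - 1)`.
Comparing coefficients of `t^n / n!` gives `∑_{i ≤ n} C(n,i) 2^i B_i = (2 - 2^n) B_n`, which vanishes
for odd `n`. At `n = 2p + 1` the odd terms beyond `i = 1` drop out, the terms `i = 0, 1` contribute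
`1 - (2p + 1)`, and what remains is the even part of the sum, i.e. the claimed sum read backwards.
-/

open PowerSeries Finset Nat

theorem Finset.sum_range_two_mul {M : Type*} [AddCommMonoid M] (f : ℕ → M) (n : ℕ) :
    ∑ i ∈ range (2 * n), f i = ∑ j ∈ range n, (f (2 * j) + f (2 * j + 1)) := by
  induction n with
  | zero => simp
  | succ n ih => rw [mul_add, sum_range_succ, sum_range_succ, sum_range_succ, ih, add_assoc]

theorem PowerSeries.coeff_mk_div_factorial_mul_exp (a : ℕ → ℚ) (n : ℕ) :
    coeff n (mk (fun i => a i / i !) * exp ℚ) =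
      (∑ i ∈ range (n + 1), n.choose i * a i) / n ! := by
  rw [coeff_mul, Nat.sum_antidiagonal_eq_sum_range_succ_mk, sum_div]
  refine sum_congr rfl fun i hi => ?_
  rw [cast_choose ℚ (mem_range_succ_iff.mp hi)]
  simp only [coeff_mk, coeff_exp, Algebra.algebraMap_self, RingHom.id_apply]
  field_simp

theorem rescale_two_bernoulliPowerSeries_mul_exp_add_one :
    rescale (2 : ℚ) (bernoulliPowerSeries ℚ) * (exp ℚ + 1) = 2 * bernoulliPowerSeries ℚ := by
  have hB := bernoulliPowerSeries_mul_exp_sub_one ℚ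
  have hexp : exp ℚ - 1 ≠ 0 := fun h => by
    simpa [coeff_exp] using congrArg (coeff 1) h
  have hexp_two : rescale (2 : ℚ) (exp ℚ) = exp ℚ ^ 2 := by
    exact_mod_cast (exp_pow_eq_rescale_exp 2).symm
  apply mul_right_cancel₀ hexp
  calc rescale (2 : ℚ) (bernoulliPowerSeries ℚ) * (exp ℚ + 1) * (exp ℚ - 1)
      = rescale (2 : ℚ) (bernoulliPowerSeries ℚ * (exp ℚ - 1)) := by
        rw [map_mul, map_sub, hexp_two, map_one]; ring
    _ = 2 * X := by rw [hB, rescale_X, ← map_ofNat C 2]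
    _ = 2 * bernoulliPowerSeries ℚ * (exp ℚ - 1) := by rw [mul_assoc, hB]

theorem sum_range_choose_mul_two_pow_mul_bernoulli (n : ℕ) :
    ∑ i ∈ range (n + 1), (n.choose i : ℚ) * 2 ^ i * bernoulli i = (2 - 2 ^ n) * bernoulli n := by
  have h := congrArg (coeff n) rescale_two_bernoulliPowerSeries_mul_exp_add_one
  have hrescale : rescale (2 : ℚ) (bernoulliPowerSeries ℚ) =
      mk fun i => 2 ^ i * bernoulli i / i ! := by
    ext i
    simp [bernoulliPowerSeries, coeff_rescale, mul_div_assoc]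
  rw [mul_add, mul_one, map_add, hrescale, coeff_mk_div_factorial_mul_exp] at h
  simp only [coeff_mk, ← map_ofNat C 2, coeff_C_mul, bernoulliPowerSeries,
    Algebra.algebraMap_self, RingHom.id_apply] at h
  have hfact : (n ! : ℚ) ≠ 0 := cast_ne_zero.mpr n.factorial_ne_zero
  field_simp at h
  simp only [mul_assoc] at h ⊢
  linear_combination h

theorem two_sub_two_pow_mul_bernoulli_of_odd {n : ℕ} (hn : Odd n) :
    (2 - 2 ^ n) * bernoulli n = 0 := by
  rcases eq_or_ne n 1 with rfl | h
  · norm_num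
  · rw [bernoulli_eq_zero_of_odd hn (by have := hn.pos; omega), mul_zero]

theorem sum_even_choose_mul_two_pow_mul_bernoulli (p : ℕ) :
    ∑ k ∈ range p, ((2 * p + 1).choose (2 * (k + 1)) : ℚ) * 2 ^ (2 * (k + 1)) *
      bernoulli (2 * (k + 1)) = 2 * p := by
  have h := sum_range_choose_mul_two_pow_mul_bernoulli (2 * p + 1)
  rw [two_sub_two_pow_mul_bernoulli_of_odd (odd_two_mul_add_one p),
    show 2 * p + 1 + 1 = 2 * (p + 1) by ring, sum_range_two_mul, sum_range_succ'] at h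
  have hodd (k : ℕ) : bernoulli (2 * (k + 1) + 1) = 0 :=
    bernoulli_eq_zero_of_odd (odd_two_mul_add_one _) (by omega)
  simp only [hodd, mul_zero, add_zero, choose_zero_right, choose_one_right, bernoulli_zero,
    bernoulli_one, pow_zero, pow_one, mul_one, zero_add] at h
  push_cast at h
  linarith

theorem bernoulli_sum_eq_two_p_general (p : ℕ) :
    ∑ j ∈ Finset.range p,
      (Nat.choose (2 * p + 1) (2 * j + 1) : ℚ) * 2 ^ (2 * p - 2 * j) *
        bernoulli (2 * p - 2 * j) = 2 * p := by
  rw [← sum_range_reflect, ← sum_even_choose_mul_two_pow_mul_bernoulli p]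
  refine sum_congr rfl fun k hk => ?_
  have hk : k < p := mem_range.mp hk
  rw [show 2 * p - 2 * (p - 1 - k) = 2 * (k + 1) by omega,
    show 2 * (p - 1 - k) + 1 = 2 * p + 1 - 2 * (k + 1) by omega, choose_symm (by omega)]

theorem bernoulli_sum_eq_two_p (p : ℕ) (hp : 1 ≤ p) :
    ∑ j ∈ Finset.range p,
      (Nat.choose (2 * p + 1) (2 * j + 1) : ℚ) * 2 ^ (2 * p - 2 * j) *
        bernoulli (2 * p - 2 * j) = 2 * p :=
  bernoulli_sum_eq_two_p_general p
end

section
/- For all integers p ≥ 1, the sum over j = 0 to p-1 of binom(2p+1, 2j+1) · 2^{2p-2j} · (2^{2p-2j} - 1) · B_{2p-2j} equals (2p+1)·(1 - E_{2p}), where B_n are Bernoulli numbers and E_n are Euler numbers. -/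
/-!
In `ℝ⟦X⟧`, with `B(x) = x / (eˣ - 1)`, one has `x tanh x = x - B(2x) + B(4x)`, and
`sinh x tanh x = cosh x - sech x` gives `sinh x · (B(4x) - B(2x)) = x (cosh x - sinh x - sech x)`.
All these are exponential generating functions, so the coefficient of `x^(2p+1)` on the left is a
binomial convolution, which is the sum in the theorem. The series identities follow algebraically
from `B(x)(eˣ - 1) = x` and `eˣ e⁻ˣ = 1`; the Euler numbers enter through `cosh · sech = 1`,
transported to power series by the Leibniz rule.
-/

/-- The Euler numbers, defined by `2 / (e^t + e^{-t}) = Σ Eₙ tⁿ/n!`. -/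
noncomputable def eulerNumber (n : ℕ) : ℝ :=
  iteratedDeriv n (fun t : ℝ => 2 / (Real.exp t + Real.exp (-t))) 0

open Finset PowerSeries
open scoped Nat ContDiff

theorem Finset.sum_range_two_mul_of_even {M : Type*} [AddCommMonoid M] {f : ℕ → M}
    (hf : ∀ k, Even k → f k = 0) (m : ℕ) :
    ∑ k ∈ range (2 * m), f k = ∑ j ∈ range m, f (2 * j + 1) := by
  induction m with
  | zero => simp
  | succ m ih =>
    rw [mul_add_one, sum_range_succ, sum_range_succ, ih, sum_range_succ, hf _ (even_two_mul m),
      add_zero]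

namespace PowerSeries

variable {K : Type*} [Field K]

noncomputable def egf (a : ℕ → K) : K⟦X⟧ := mk fun n => a n / n !

@[simp]
theorem coeff_egf (a : ℕ → K) (n : ℕ) : coeff n (egf a) = a n / n ! := coeff_mk _ _

theorem egf_add (a b : ℕ → K) : egf (a + b) = egf a + egf b := by
  ext n; simp [add_div]

theorem egf_sub (a b : ℕ → K) : egf (a - b) = egf a - egf b := by
  ext n; simp [sub_div]

theorem rescale_egf (c : K) (a : ℕ → K) : rescale c (egf a) = egf fun n => c ^ n * a n := by
  ext n; simp [mul_div_assoc]

variable [CharZero K]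

theorem egf_injective : Function.Injective (egf : (ℕ → K) → K⟦X⟧) := by
  intro a b h
  funext n
  have hn := congrArg (coeff n) h
  rw [coeff_egf, coeff_egf] at hn
  exact (div_left_inj' (mod_cast n.factorial_ne_zero)).mp hn

theorem X_mul_egf (a : ℕ → K) : X * egf a = egf fun n => n * a (n - 1) := by
  ext (_ | n)
  · simp
  · rw [coeff_succ_X_mul, coeff_egf, coeff_egf, Nat.factorial_succ, Nat.add_sub_cancel]
    push_cast
    field_simp

theorem egf_mul (a b : ℕ → K) :
    egf a * egf b = egf fun n => ∑ k ∈ range (n + 1), n.choose k * a k * b (n - k) := by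
  ext n
  rw [coeff_mul, Nat.sum_antidiagonal_eq_sum_range_succ_mk, coeff_egf, sum_div]
  refine sum_congr rfl fun k hk => ?_
  have : (n ! : K) ≠ 0 := mod_cast n.factorial_ne_zero
  rw [coeff_egf, coeff_egf, Nat.cast_choose K (mem_range_succ_iff.mp hk)]
  field_simp

theorem exp_eq_egf : exp K = egf 1 := by
  ext n; simp

theorem bernoulliPowerSeries_eq_egf : bernoulliPowerSeries K = egf fun n => (bernoulli n : K) := by
  ext n; simp [bernoulliPowerSeries]

end PowerSeries

section Hyperbolic

variable (K : Type*) [Field K] [CharZero K]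

noncomputable def coshSeries : K⟦X⟧ := egf fun n => if Even n then 1 else 0

noncomputable def sinhSeries : K⟦X⟧ := egf fun n => if Even n then 0 else 1

/-- `x tanh x = x - B(2x) + B(4x)` with `B(x) = x / (eˣ - 1)`, because
`tanh x = 1 - 2 / (e²ˣ + 1)` and `1 / (y + 1) = 1 / (y - 1) - 2 / (y² - 1)`. -/
noncomputable def xTanhSeries : K⟦X⟧ :=
  X + rescale 4 (bernoulliPowerSeries K) - rescale 2 (bernoulliPowerSeries K)

theorem coshSeries_add_sinhSeries : coshSeries K + sinhSeries K = exp K := by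
  rw [coshSeries, sinhSeries, ← egf_add, exp_eq_egf]
  congr 1
  funext n
  by_cases h : Even n <;> simp [h]

theorem coshSeries_sub_sinhSeries : coshSeries K - sinhSeries K = evalNegHom (exp K) := by
  rw [coshSeries, sinhSeries, ← egf_sub, exp_eq_egf, evalNegHom, rescale_egf]
  congr 1
  funext n
  rcases Nat.even_or_odd n with h | h
  · simp [h, h.neg_one_pow]
  · simp [Nat.not_even_iff_odd.mpr h, h.neg_one_pow]

theorem coshSeries_sq_sub_sinhSeries_sq : coshSeries K ^ 2 - sinhSeries K ^ 2 = 1 := by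
  linear_combination (coshSeries K - sinhSeries K) * coshSeries_add_sinhSeries K
    + exp K * coshSeries_sub_sinhSeries K + exp_mul_exp_neg_eq_one (A := K)

theorem rescale_bernoulliPowerSeries_mul_exp_pow_sub_one (k : ℕ) :
    rescale (k : K) (bernoulliPowerSeries K) * (exp K ^ k - 1) = (k : K⟦X⟧) * X := by
  simpa [exp_pow_eq_rescale_exp, rescale_X, map_natCast] using
    congrArg (rescale (k : K)) (bernoulliPowerSeries_mul_exp_sub_one K)

theorem coshSeries_mul_xTanhSeries : coshSeries K * xTanhSeries K = X * sinhSeries K := by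
  set C := coshSeries K
  set x := exp K
  have h4 := rescale_bernoulliPowerSeries_mul_exp_pow_sub_one K 4
  have h2 := rescale_bernoulliPowerSeries_mul_exp_pow_sub_one K 2
  push_cast at h4 h2
  have hD : x ^ 4 - 1 ≠ 0 :=
    right_ne_zero_of_mul (h4 ▸ mul_ne_zero (fun h => by
      simpa [map_ofNat] using congrArg constantCoeff h) X_ne_zero)
  refine mul_right_cancel₀ hD ?_
  rw [xTanhSeries]
  linear_combination C * h4 - C * (x ^ 2 + 1) * h2
    + X * (x ^ 2 - 1) * x ^ 2 * coshSeries_sub_sinhSeries K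
    - X * (x ^ 2 - 1) * coshSeries_add_sinhSeries K
    + X * (x ^ 2 - 1) * x * exp_mul_exp_neg_eq_one (A := K)

theorem sinhSeries_mul_xTanhSeries_sub_X {G : K⟦X⟧} (hG : coshSeries K * G = 1) :
    sinhSeries K * (xTanhSeries K - X) = X * (coshSeries K - sinhSeries K - G) := by
  linear_combination sinhSeries K * G * coshSeries_mul_xTanhSeries K
    - X * G * coshSeries_sq_sub_sinhSeries_sq K
    + (X * coshSeries K - X * sinhSeries K - sinhSeries K * (xTanhSeries K - X)) * hG

end Hyperbolic

section Taylor

variable {𝕜 : Type*} [NontriviallyNormedField 𝕜] [CharZero 𝕜]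

noncomputable def taylorSeries (f : 𝕜 → 𝕜) (x : 𝕜) : 𝕜⟦X⟧ := egf fun n => iteratedDeriv n f x

theorem taylorSeries_mul {f g : 𝕜 → 𝕜} {x : 𝕜} (hf : ContDiffAt 𝕜 ∞ f x)
    (hg : ContDiffAt 𝕜 ∞ g x) :
    taylorSeries (f * g) x = taylorSeries f x * taylorSeries g x := by
  rw [taylorSeries, taylorSeries, taylorSeries, egf_mul]
  congr 1
  funext n
  exact iteratedDeriv_mul (hf.of_le (mod_cast le_top)) (hg.of_le (mod_cast le_top))

theorem taylorSeries_one (x : 𝕜) : taylorSeries 1 x = 1 := by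
  ext n
  by_cases hn : n = 0 <;> simp [taylorSeries, Pi.one_def, iteratedDeriv_const, coeff_one, hn]

end Taylor

theorem taylorSeries_cosh_zero : taylorSeries Real.cosh 0 = coshSeries ℝ := by
  rw [taylorSeries, coshSeries]
  congr 1
  funext n
  rcases Nat.even_or_odd' n with ⟨k, rfl | rfl⟩
  · simp [Real.iteratedDeriv_even_cosh]
  · simp

theorem coshSeries_mul_egf_eulerNumber : coshSeries ℝ * egf eulerNumber = 1 := by
  have hsech : Real.cosh * (fun t : ℝ => 2 / (Real.exp t + Real.exp (-t))) = 1 := by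
    funext t
    have : Real.exp t + Real.exp (-t) ≠ 0 := by positivity
    rw [Pi.mul_apply, Real.cosh_eq, Pi.one_apply]
    field_simp
  have hsmooth : ContDiff ℝ ∞ fun t : ℝ => 2 / (Real.exp t + Real.exp (-t)) :=
    contDiff_const.div (by fun_prop) fun t => by positivity
  rw [← taylorSeries_cosh_zero, show egf eulerNumber = taylorSeries _ 0 from rfl,
    ← taylorSeries_mul Real.contDiff_cosh.contDiffAt hsmooth.contDiffAt, hsech, taylorSeries_one]

theorem bernoulli_euler_sum_general (p : ℕ) :
    ∑ j ∈ Finset.range p,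
      (Nat.choose (2 * p + 1) (2 * j + 1) : ℝ) * 2 ^ (2 * p - 2 * j) *
        (2 ^ (2 * p - 2 * j) - 1) * (bernoulli (2 * p - 2 * j) : ℝ) =
      (2 * p + 1) * (1 - eulerNumber (2 * p)) := by
  have hseries := sinhSeries_mul_xTanhSeries_sub_X ℝ coshSeries_mul_egf_eulerNumber
  rw [xTanhSeries, add_sub_assoc, add_sub_cancel_left, sinhSeries, coshSeries,
    bernoulliPowerSeries_eq_egf, rescale_egf, rescale_egf, ← egf_sub, egf_mul, ← egf_sub,
    ← egf_sub, X_mul_egf] at hseries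
  have hcoeff := congrFun (egf_injective hseries) (2 * p + 1)
  rw [show 2 * p + 1 + 1 = 2 * (p + 1) by ring,
    sum_range_two_mul_of_even (fun k hk => by simp [hk]), sum_range_succ] at hcoeff
  -- the term `k = 2p + 1` is `(4⁰ - 2⁰) B₀ = 0`
  simp only [Nat.not_even_bit1, ↓reduceIte, mul_one, Nat.reduceSubDiff, Pi.sub_apply,
    Nat.choose_self, Nat.cast_one, tsub_self, pow_zero, bernoulli_zero, Rat.cast_one, sub_self,
    mul_zero, add_zero, Nat.cast_add, Nat.cast_mul, Nat.cast_ofNat, add_tsub_cancel_right,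
    even_two, Even.mul_right, sub_zero] at hcoeff
  rw [← hcoeff]
  refine sum_congr rfl fun j _ => ?_
  rw [show (4 : ℝ) = 2 * 2 by norm_num, mul_pow]
  ring

theorem bernoulli_euler_sum (p : ℕ) (hp : 1 ≤ p) :
    ∑ j ∈ Finset.range p,
      (Nat.choose (2 * p + 1) (2 * j + 1) : ℝ) * 2 ^ (2 * p - 2 * j) *
        (2 ^ (2 * p - 2 * j) - 1) * (bernoulli (2 * p - 2 * j) : ℝ) =
      (2 * p + 1) * (1 - eulerNumber (2 * p)) :=
  bernoulli_euler_sum_general p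
end

section
/- For real s > 1, the limit as ℓ → ∞ of (1/binom(2ℓ,ℓ)) · Σ_{k=1}^{ℓ} binom(2ℓ, ℓ-k) / k^s equals ζ(s), the Riemann zeta function. -/
/-!
Dividing by the central binomial coefficient, the `k`-th term becomes
`(C(2ℓ, ℓ-k) / C(2ℓ, ℓ)) · k^(-s)`. The ratio lies in `[0, 1]` and, for fixed `k`, tends to `1`,
being the product of the factors `(ℓ - i) / (ℓ + i + 1)` for `i < k`. Since `∑ k^(-s)` converges,
Tannery's theorem (dominated convergence for series) lets the limit pass inside the sum.
-/

open Filter Finset Topology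

theorem tendsto_sum_range_smul_of_tendsto_one {E : Type*} [NormedAddCommGroup E]
    [NormedSpace ℝ E] [CompleteSpace E] {f : ℕ → E} (hf : Summable (‖f ·‖))
    {a : ℕ → ℕ → ℝ} (ha : ∀ k, Tendsto (a · k) atTop (𝓝 1))
    (ha_le : ∀ ℓ, ∀ k < ℓ, |a ℓ k| ≤ 1) :
    Tendsto (fun ℓ ↦ ∑ k ∈ range ℓ, a ℓ k • f k) atTop (𝓝 (∑' k, f k)) := by
  set F : ℕ → ℕ → E := fun ℓ k ↦ if k < ℓ then a ℓ k • f k else 0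
  have hF : ∀ ℓ, ∑' k, F ℓ k = ∑ k ∈ range ℓ, a ℓ k • f k := fun ℓ ↦ by
    rw [tsum_eq_sum (s := range ℓ) fun k hk ↦ if_neg (by simpa using hk)]
    exact sum_congr rfl fun k hk ↦ if_pos (mem_range.1 hk)
  have hF_lim (k : ℕ) : Tendsto (F · k) atTop (𝓝 (f k)) := by
    have := (ha k).smul_const (f k)
    rw [one_smul] at this
    exact this.congr' <| (eventually_gt_atTop k).mono fun ℓ hk ↦ (if_pos hk).symm
  have hF_le (ℓ k : ℕ) : ‖F ℓ k‖ ≤ ‖f k‖ := by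
    by_cases hk : k < ℓ
    · rw [show F ℓ k = a ℓ k • f k from if_pos hk, norm_smul, Real.norm_eq_abs]
      exact mul_le_of_le_one_left (norm_nonneg _) (ha_le ℓ k hk)
    · simp [F, if_neg hk]
  simpa only [hF] using
    tendsto_tsum_of_dominated_convergence hf hF_lim (.of_forall hF_le)

theorem Nat.choose_two_mul_sub_succ_mul (ℓ j : ℕ) (hj : j < ℓ) :
    ((2 * ℓ).choose (ℓ - (j + 1)) : ℝ) * (ℓ + j + 1) = (2 * ℓ).choose (ℓ - j) * (ℓ - j) := by
  have h := Nat.choose_succ_right_eq (2 * ℓ) (ℓ - (j + 1))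
  rw [show ℓ - (j + 1) + 1 = ℓ - j by omega, show 2 * ℓ - (ℓ - (j + 1)) = ℓ + j + 1 by omega] at h
  rw [← Nat.cast_sub hj.le]
  exact_mod_cast h.symm

theorem tendsto_natCast_sub_div_add_atTop (j : ℕ) :
    Tendsto (fun ℓ : ℕ ↦ ((ℓ : ℝ) - j) / (ℓ + j + 1)) atTop (𝓝 1) := by
  rw [← tendsto_add_atTop_iff_nat j]
  convert tendsto_natCast_div_add_atTop (2 * j + 1 : ℝ) using 2
  push_cast
  ring_nf

theorem Nat.tendsto_choose_two_mul_sub_div_centralBinom (j : ℕ) :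
    Tendsto (fun ℓ : ℕ ↦ ((2 * ℓ).choose (ℓ - j) : ℝ) / ℓ.centralBinom) atTop (𝓝 1) := by
  induction j with
  | zero =>
    simp [← Nat.centralBinom_eq_two_mul_choose, Nat.centralBinom_ne_zero]
  | succ j ih =>
    have hlim := ih.mul (tendsto_natCast_sub_div_add_atTop j)
    rw [mul_one] at hlim
    refine hlim.congr' <| (eventually_gt_atTop j).mono fun ℓ hj ↦ ?_
    have hpos : (ℓ : ℝ) + j + 1 ≠ 0 := by positivity
    have hC : (ℓ.centralBinom : ℝ) ≠ 0 := by exact_mod_cast ℓ.centralBinom_ne_zero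
    have hrec := Nat.choose_two_mul_sub_succ_mul ℓ j hj
    field_simp
    linear_combination -hrec

theorem Nat.abs_choose_two_mul_div_centralBinom_le_one (ℓ r : ℕ) :
    |((2 * ℓ).choose r : ℝ) / ℓ.centralBinom| ≤ 1 := by
  have hC : (0 : ℝ) < ℓ.centralBinom := by exact_mod_cast ℓ.centralBinom_pos
  rw [abs_of_nonneg (by positivity), div_le_one hC]
  exact_mod_cast Nat.choose_le_centralBinom r ℓ

theorem tendsto_binom_weighted_zeta (s : ℝ) (hs : 1 < s) :
    Filter.Tendsto
      (fun ℓ : ℕ =>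
        (1 / (Nat.choose (2 * ℓ) ℓ : ℝ)) *
          ∑ k ∈ Finset.Icc 1 ℓ, (Nat.choose (2 * ℓ) (ℓ - k) : ℝ) / (k : ℝ) ^ s)
      Filter.atTop
      (nhds (∑' k : ℕ, 1 / ((k : ℝ) + 1) ^ s)) := by
  have hsum : Summable fun k : ℕ ↦ ‖1 / ((k : ℝ) + 1) ^ s‖ := by
    have hshift := (summable_nat_add_iff 1).2 (Real.summable_one_div_nat_rpow.2 hs)
    exact (by simpa using hshift : Summable fun k : ℕ ↦ 1 / ((k : ℝ) + 1) ^ s).norm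
  have hlim := tendsto_sum_range_smul_of_tendsto_one hsum
    (fun k ↦ Nat.tendsto_choose_two_mul_sub_div_centralBinom (k + 1))
    fun ℓ k _ ↦ Nat.abs_choose_two_mul_div_centralBinom_le_one ℓ _
  refine hlim.congr fun ℓ ↦ ?_
  rw [← Nat.centralBinom_eq_two_mul_choose, mul_sum, ← Ico_add_one_right_eq_Icc,
    sum_Ico_eq_sum_range, Nat.add_sub_cancel]
  refine sum_congr rfl fun k _ ↦ ?_
  rw [add_comm 1 k]
  push_cast
  ring
end

section
/- For real s > 1, the limit as ℓ → ∞ of (1/binom(2ℓ,ℓ)) · Σ_{k=1}^{ℓ} binom(2ℓ, ℓ-k) · (-1)^{k-1} / k^s equals (1 - 2^{1-s}) · ζ(s). -/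
/-!
Write `r ℓ k = C(2ℓ, ℓ + k) / C(2ℓ, ℓ)`, so that the sum is
`∑_{k ≥ 0} r ℓ (k + 1) (-1)^k / (k + 1)^s` (the terms with `k ≥ ℓ` vanish).
The weights satisfy `0 ≤ r ℓ k ≤ 1` and `r ℓ (k + 1) = r ℓ k · (ℓ - k) / (ℓ + k + 1)`,
so `r ℓ k → 1` for each fixed `k`. Dominated convergence against `∑ 1 / (k + 1)^s` turns the
limit into the alternating series `∑ (-1)^k / (k + 1)^s`, which splitting off the odd terms
identifies with `(1 - 2^{1-s}) ζ(s)`.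
-/

open Filter Topology Nat

section Alternating

variable {α : Type*} [Ring α] [UniformSpace α] [IsUniformAddGroup α] [CompleteSpace α]
  [T2Space α]

theorem tsum_neg_one_pow_mul_eq_sub {f : ℕ → α} (hf : Summable f) :
    ∑' n, (-1) ^ n * f n = ∑' n, f n - 2 * ∑' n, f (2 * n + 1) := by
  have heven : Summable fun n ↦ f (2 * n) :=
    hf.comp_injective (mul_right_injective₀ (two_ne_zero' ℕ))
  have hodd : Summable fun n ↦ f (2 * n + 1) :=
    hf.comp_injective ((add_left_injective 1).comp (mul_right_injective₀ (two_ne_zero' ℕ)))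
  have hsigned : ∀ n, (-1 : α) ^ (2 * n) * f (2 * n) = f (2 * n) ∧
      (-1 : α) ^ (2 * n + 1) * f (2 * n + 1) = -f (2 * n + 1) := fun n ↦ by
    simp [pow_succ, pow_mul]
  rw [← tsum_even_add_odd heven hodd,
    ← tsum_even_add_odd (f := fun n ↦ (-1) ^ n * f n)
      (heven.congr fun n ↦ (hsigned n).1.symm) (hodd.neg.congr fun n ↦ (hsigned n).2.symm),
    tsum_congr fun n ↦ (hsigned n).1, tsum_congr fun n ↦ (hsigned n).2, tsum_neg, two_mul]
  abel

end Alternating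

theorem summable_one_div_nat_add_one_rpow {s : ℝ} (hs : 1 < s) :
    Summable fun n : ℕ ↦ 1 / ((n : ℝ) + 1) ^ s := by
  simpa using (summable_nat_add_iff 1).2 (Real.summable_one_div_nat_rpow.2 hs)

theorem one_div_natCast_two_mul_add_one_add_one_rpow (s : ℝ) (n : ℕ) :
    1 / ((↑(2 * n + 1) : ℝ) + 1) ^ s = 2 ^ (-s) * (1 / ((n : ℝ) + 1) ^ s) := by
  have h : ((↑(2 * n + 1) : ℝ) + 1) = 2 * ((n : ℝ) + 1) := by push_cast; ring
  rw [h, Real.mul_rpow zero_le_two (by positivity), Real.rpow_neg zero_le_two]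
  field_simp

theorem tsum_neg_one_pow_mul_one_div_nat_add_one_rpow {s : ℝ} (hs : 1 < s) :
    ∑' n : ℕ, (-1) ^ n * (1 / ((n : ℝ) + 1) ^ s) =
      (1 - 2 ^ (1 - s)) * ∑' n : ℕ, 1 / ((n : ℝ) + 1) ^ s := by
  rw [tsum_neg_one_pow_mul_eq_sub (summable_one_div_nat_add_one_rpow hs),
    tsum_congr (one_div_natCast_two_mul_add_one_add_one_rpow s), tsum_mul_left,
    sub_eq_add_neg (1 : ℝ) s, Real.rpow_add zero_lt_two, Real.rpow_one]
  ring

noncomputable def binomRatio (ℓ k : ℕ) : ℝ :=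
  ((2 * ℓ).choose (ℓ + k) : ℝ) / centralBinom ℓ

theorem binomRatio_nonneg (ℓ k : ℕ) : 0 ≤ binomRatio ℓ k := by
  unfold binomRatio; positivity

theorem binomRatio_le_one (ℓ k : ℕ) : binomRatio ℓ k ≤ 1 :=
  div_le_one_of_le₀ (mod_cast choose_le_centralBinom _ _) (Nat.cast_nonneg _)

theorem binomRatio_zero_right (ℓ : ℕ) : binomRatio ℓ 0 = 1 :=
  div_self (mod_cast (centralBinom_pos ℓ).ne')

theorem binomRatio_eq_zero {ℓ k : ℕ} (h : ℓ < k) : binomRatio ℓ k = 0 := by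
  rw [binomRatio, choose_eq_zero_of_lt (by omega), Nat.cast_zero, zero_div]

theorem binomRatio_succ {ℓ k : ℕ} (h : k ≤ ℓ) :
    binomRatio ℓ (k + 1) = binomRatio ℓ k * ((ℓ - k : ℝ) / (ℓ + k + 1)) := by
  have hrec := choose_succ_right_eq (2 * ℓ) (ℓ + k)
  rw [show 2 * ℓ - (ℓ + k) = ℓ - k by omega] at hrec
  have hrecR : ((2 * ℓ).choose (ℓ + (k + 1)) : ℝ) * (ℓ + k + 1) =
      (2 * ℓ).choose (ℓ + k) * (ℓ - k) := by
    exact_mod_cast hrec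
  have hcb : (centralBinom ℓ : ℝ) ≠ 0 := mod_cast (centralBinom_pos ℓ).ne'
  rw [binomRatio, binomRatio]
  field_simp
  linear_combination hrecR

theorem tendsto_binomRatio (k : ℕ) : Tendsto (binomRatio · k) atTop (𝓝 1) := by
  induction k with
  | zero => simp only [binomRatio_zero_right, tendsto_const_nhds]
  | succ k ih =>
    have hfactor : Tendsto (fun ℓ : ℕ ↦ (ℓ - k : ℝ) / (ℓ + k + 1)) atTop (𝓝 1) := by
      have h := tendsto_add_mul_div_add_mul_atTop_nhds (-k : ℝ) (k + 1) 1 one_ne_zero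
      rw [div_one] at h
      exact h.congr fun ℓ ↦ by ring_nf
    refine (mul_one (1 : ℝ) ▸ ih.mul hfactor).congr' ?_
    filter_upwards [eventually_ge_atTop k] with ℓ hℓ
    exact (binomRatio_succ hℓ).symm

theorem one_div_choose_mul_sum_Icc_eq_tsum_binomRatio (ℓ : ℕ) (g : ℕ → ℝ) :
    1 / ((2 * ℓ).choose ℓ : ℝ) *
        ∑ k ∈ Finset.Icc 1 ℓ, ((2 * ℓ).choose (ℓ - k) : ℝ) * g k =
      ∑' k, binomRatio ℓ (k + 1) * g (k + 1) := by
  rw [tsum_eq_sum (s := Finset.range ℓ) fun k hk ↦ by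
      rw [binomRatio_eq_zero (by simp only [Finset.mem_range] at hk; omega), zero_mul],
    ← Finset.Ico_add_one_right_eq_Icc, Finset.sum_Ico_eq_sum_range, Nat.add_sub_cancel,
    Finset.mul_sum]
  refine Finset.sum_congr rfl fun k hk ↦ ?_
  rw [Finset.mem_range] at hk
  rw [add_comm 1 k, binomRatio, centralBinom,
    choose_symm_of_eq_add (show 2 * ℓ = (ℓ - (k + 1)) + (ℓ + (k + 1)) by omega)]
  ring

theorem tendsto_binom_weighted_eta (s : ℝ) (hs : 1 < s) :
    Filter.Tendsto
      (fun ℓ : ℕ =>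
        (1 / (Nat.choose (2 * ℓ) ℓ : ℝ)) *
          ∑ k ∈ Finset.Icc 1 ℓ,
            (Nat.choose (2 * ℓ) (ℓ - k) : ℝ) * (-1) ^ (k - 1) / (k : ℝ) ^ s)
      Filter.atTop
      (nhds ((1 - 2 ^ (1 - s)) * ∑' k : ℕ, 1 / ((k : ℝ) + 1) ^ s)) := by
  simp_rw [mul_div_assoc, one_div_choose_mul_sum_Icc_eq_tsum_binomRatio, Nat.add_sub_cancel,
    Nat.cast_succ, ← tsum_neg_one_pow_mul_one_div_nat_add_one_rpow hs,
    div_eq_mul_one_div ((-1 : ℝ) ^ _)]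
  refine tendsto_tsum_of_dominated_convergence (summable_one_div_nat_add_one_rpow hs)
    (fun k ↦ by simpa using (tendsto_binomRatio (k + 1)).mul_const _)
    (Eventually.of_forall fun ℓ k ↦ ?_)
  rw [norm_mul, norm_mul, norm_pow, norm_neg, norm_one, one_pow, one_mul,
    Real.norm_of_nonneg (binomRatio_nonneg ℓ _)]
  exact mul_le_of_le_one_left (norm_nonneg _) (binomRatio_le_one ℓ _) |>.trans_eq
    (Real.norm_of_nonneg (by positivity))
end

section
/- For real s > 1, the limit as ℓ → ∞ of (1/binom(2ℓ+1, ℓ+1)) · Σ_{k=0}^{ℓ} binom(2ℓ+1, ℓ-k) / (2k+1)^s equals (1 - 2^{-s}) · ζ(s). -/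
/-!
The weights `C(2ℓ+1, ℓ-k) / C(2ℓ+1, ℓ)` lie in `[0, 1]`, the middle coefficient being the largest,
and tend to `1` for each fixed `k`, since consecutive weights differ by the factor
`(ℓ-k) / (ℓ+k+2)`. Tannery's theorem with the summable majorant `1 / (2k+1)^s` therefore turns
the limit into `∑ 1 / (2k+1)^s`, which is `ζ(s)` minus its even part `2^(-s) ζ(s)`.
-/

open Filter Topology Finset

theorem tendsto_finset_sum_of_dominated_convergence {α β G : Type*} {𝓕 : Filter α}
    [NormedAddCommGroup G] [CompleteSpace G] {S : α → Finset β} (hS : Tendsto S 𝓕 atTop)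
    {f : α → β → G} {g : β → G} {bound : β → ℝ} (h_sum : Summable bound)
    (hab : ∀ k, Tendsto (f · k) 𝓕 (𝓝 (g k))) (h_bound : ∀ᶠ n in 𝓕, ∀ k, ‖f n k‖ ≤ bound k) :
    Tendsto (fun n ↦ ∑ k ∈ S n, f n k) 𝓕 (𝓝 (∑' k, g k)) := by
  refine (tendsto_tsum_of_dominated_convergence (f := fun n ↦ (S n : Set β).indicator (f n))
    h_sum (fun k ↦ (hab k).congr' ?_) ?_).congr fun n ↦ (sum_eq_tsum_indicator (f n) (S n)).symm
  · filter_upwards [hS.eventually (eventually_ge_atTop {k})] with n hn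
    rw [Set.indicator_of_mem (by simpa using hn)]
  · filter_upwards [h_bound] with n hn k
    exact (norm_indicator_le_norm_self _ k).trans (hn k)

theorem Nat.choose_two_mul_add_one_le_middle (ℓ k : ℕ) :
    (2 * ℓ + 1).choose k ≤ (2 * ℓ + 1).choose ℓ := by
  simpa [show (2 * ℓ + 1) / 2 = ℓ by omega] using Nat.choose_le_middle k (2 * ℓ + 1)

theorem Nat.cast_choose_two_mul_add_one_sub_succ {ℓ k : ℕ} (hk : k < ℓ) :
    ((2 * ℓ + 1).choose (ℓ - (k + 1)) : ℝ) =
      (2 * ℓ + 1).choose (ℓ - k) * ((ℓ - k) / (ℓ + k + 2)) := by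
  have h := Nat.choose_succ_right_eq (2 * ℓ + 1) (ℓ - (k + 1))
  rw [show ℓ - (k + 1) + 1 = ℓ - k by omega, show 2 * ℓ + 1 - (ℓ - (k + 1)) = ℓ + k + 2 by omega]
    at h
  have h' : ((2 * ℓ + 1).choose (ℓ - k) : ℝ) * (ℓ - k) =
      (2 * ℓ + 1).choose (ℓ - (k + 1)) * (ℓ + k + 2) := by
    rw [← Nat.cast_sub hk.le]; exact_mod_cast h
  field_simp
  linarith

theorem tendsto_choose_two_mul_add_one_sub_div_choose (k : ℕ) :
    Tendsto (fun ℓ : ℕ ↦ ((2 * ℓ + 1).choose (ℓ - k) : ℝ) / (2 * ℓ + 1).choose ℓ)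
      atTop (𝓝 1) := by
  induction k with
  | zero =>
    refine tendsto_const_nhds.congr fun ℓ ↦ ?_
    have : ((2 * ℓ + 1).choose ℓ : ℝ) ≠ 0 := by exact_mod_cast (Nat.choose_pos (by omega)).ne'
    simp [this]
  | succ k ih =>
    have ratio : Tendsto (fun ℓ : ℕ ↦ ((ℓ : ℝ) - k) / (ℓ + k + 2)) atTop (𝓝 1) := by
      have h := tendsto_add_mul_div_add_mul_atTop_nhds (-(k : ℝ)) (k + 2) 1 one_ne_zero
      rw [div_one] at h
      exact h.congr fun ℓ ↦ by ring
    have h := ih.mul ratio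
    rw [one_mul] at h
    refine h.congr' ?_
    filter_upwards [eventually_gt_atTop k] with ℓ hℓ
    rw [Nat.cast_choose_two_mul_add_one_sub_succ hℓ]
    ring

theorem summable_one_div_two_mul_add_one_rpow {s : ℝ} (hs : 1 < s) :
    Summable (fun k : ℕ ↦ 1 / (2 * (k : ℝ) + 1) ^ s) := by
  simpa [Function.comp_def] using (Real.summable_one_div_nat_rpow.2 hs).comp_injective
    (show Function.Injective (fun k : ℕ ↦ 2 * k + 1) from fun a b h ↦ by simp only at h; omega)

theorem tsum_one_div_two_mul_add_one_rpow {s : ℝ} (hs : 1 < s) :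
    ∑' k : ℕ, 1 / (2 * (k : ℝ) + 1) ^ s = (1 - 2 ^ (-s)) * ∑' k : ℕ, 1 / ((k : ℝ) + 1) ^ s := by
  set f : ℕ → ℝ := fun n ↦ 1 / (n : ℝ) ^ s
  have hf : Summable f := Real.summable_one_div_nat_rpow.2 hs
  have h_even (k : ℕ) : f (2 * k) = 2 ^ (-s) * f k := by
    simp only [f, Nat.cast_mul, Nat.cast_ofNat]
    rw [Real.mul_rpow zero_le_two k.cast_nonneg, Real.rpow_neg zero_le_two]
    field_simp
  have h_split := tsum_even_add_odd (f := f)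
    (hf.comp_injective (show Function.Injective (2 * ·) from fun a b h ↦ by simp only at h; omega))
    (by simpa [f] using summable_one_div_two_mul_add_one_rpow hs)
  have h_shift : ∑' n, f n = ∑' k : ℕ, 1 / ((k : ℝ) + 1) ^ s := by
    rw [hf.tsum_eq_zero_add]
    simp [f, Real.zero_rpow (by linarith : s ≠ 0)]
  simp only [h_even, tsum_mul_left] at h_split
  simp only [f, Nat.cast_add, Nat.cast_mul, Nat.cast_ofNat, Nat.cast_one] at h_split h_shift
  rw [← h_shift]
  linarith

theorem tendsto_binom_weighted_odd_zeta (s : ℝ) (hs : 1 < s) :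
    Filter.Tendsto
      (fun ℓ : ℕ =>
        (1 / (Nat.choose (2 * ℓ + 1) (ℓ + 1) : ℝ)) *
          ∑ k ∈ Finset.range (ℓ + 1),
            (Nat.choose (2 * ℓ + 1) (ℓ - k) : ℝ) / (2 * (k : ℝ) + 1) ^ s)
      Filter.atTop
      (nhds ((1 - 2 ^ (-s)) * ∑' k : ℕ, 1 / ((k : ℝ) + 1) ^ s)) := by
  rw [← tsum_one_div_two_mul_add_one_rpow hs]
  have h_majorant_nonneg (k : ℕ) : 0 ≤ 1 / (2 * (k : ℝ) + 1) ^ s := by positivity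
  have h_weight_le (ℓ k : ℕ) :
      ((2 * ℓ + 1).choose (ℓ - k) : ℝ) / (2 * ℓ + 1).choose ℓ ≤ 1 :=
    div_le_one_of_le₀ (mod_cast Nat.choose_two_mul_add_one_le_middle ℓ (ℓ - k)) (by positivity)
  have h := tendsto_finset_sum_of_dominated_convergence
    (tendsto_finset_range.comp (tendsto_add_atTop_nat 1))
    (summable_one_div_two_mul_add_one_rpow hs)
    (fun k ↦ (tendsto_choose_two_mul_add_one_sub_div_choose k).mul_const (1 / (2 * (k : ℝ) + 1) ^ s))
    (Eventually.of_forall fun ℓ k ↦ by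
      rw [Real.norm_of_nonneg (by positivity)]
      exact mul_le_of_le_one_left (h_majorant_nonneg k) (h_weight_le ℓ k))
  simp only [one_mul] at h
  refine h.congr fun ℓ ↦ ?_
  simp only [Function.comp_apply, Nat.choose_symm_half, mul_sum]
  refine sum_congr rfl fun k _ ↦ ?_
  ring
end

section
/- For every integer ℓ ≥ 1, 4 · Σ_{k=0}^{⌊(ℓ-1)/2⌋} binom(2ℓ, ℓ-2k-1) / (2k+1)^2 = binom(2ℓ, ℓ) · Σ_{j=1}^{ℓ} 4^j / (binom(2j, j) · j^2). -/
/-!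
By symmetry the left-hand side is `4 S ℓ` with `S ℓ = ∑ₖ C(2ℓ, ℓ+2k+1) / (2k+1)²`, a form
free of truncated subtraction whose terms vanish for `2k ≥ ℓ`. Splitting
`(ℓ+1)² = (ℓ-2k)(ℓ+2k+2) + (2k+1)²` and using
`(ℓ-2k)(ℓ+2k+2) C(2ℓ+2, ℓ+2k+2) = (2ℓ+2)(2ℓ+1) C(2ℓ, ℓ+2k+1)` gives the recurrence
`(ℓ+1)² S (ℓ+1) = (2ℓ+2)(2ℓ+1) S ℓ + 4^ℓ`, where `4^ℓ` is the sum of every other entry in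
the upper half of row `2ℓ+2` of Pascal's triangle (Pascal's rule pairs them into the upper
half of row `2ℓ+1`). As `(ℓ+1) C(2ℓ+2, ℓ+1) = 2(2ℓ+1) C(2ℓ, ℓ)`, the recurrence says that
`4 S ℓ / C(2ℓ, ℓ)` increases by `4^(ℓ+1) / (C(2ℓ+2, ℓ+1) (ℓ+1)²)` at each step.
-/

open Finset

theorem sum_range_choose_succ_add_two_mul (N m K : ℕ) :
    ∑ k ∈ range K, (N + 1).choose (m + 2 * k + 1) = ∑ j ∈ range (2 * K), N.choose (m + j) := by
  induction K with
  | zero => simp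
  | succ K ih =>
    rw [sum_range_succ, ih, Nat.choose_succ_succ', Nat.mul_succ, sum_range_succ, sum_range_succ]
    exact (add_assoc _ _ _).symm

theorem sum_range_choose_upper_halfway (m : ℕ) :
    ∑ j ∈ range (m + 1), (2 * m + 1).choose (m + 1 + j) = 4 ^ m := by
  rw [← Nat.sum_range_choose_halfway m, ← sum_range_reflect]
  refine sum_congr rfl fun j hj => ?_
  rw [mem_range] at hj
  rw [← Nat.choose_symm (by omega)]
  congr 1
  omega

theorem sum_range_choose_add_two_mul_add_two (ℓ : ℕ) :
    ∑ k ∈ range (ℓ + 1), (2 * ℓ + 2).choose (ℓ + 2 * k + 2) = 4 ^ ℓ := by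
  calc ∑ k ∈ range (ℓ + 1), (2 * ℓ + 2).choose (ℓ + 2 * k + 2)
      = ∑ j ∈ range ((ℓ + 1) + (ℓ + 1)), (2 * ℓ + 1).choose (ℓ + 1 + j) := by
        rw [← two_mul, ← sum_range_choose_succ_add_two_mul]
        exact sum_congr rfl fun k _ => by congr 1; omega
    _ = 4 ^ ℓ := by
        rw [sum_range_add, sum_range_choose_upper_halfway, sum_eq_zero, add_zero]
        exact fun j _ => Nat.choose_eq_zero_of_lt (by omega)

theorem sub_mul_add_one_mul_choose_add_two {R : Type*} [CommRing R] (n j : ℕ) :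
    ((n : R) + 1 - j) * (j + 1) * (n + 2).choose (j + 1) = (n + 2) * (n + 1) * n.choose j := by
  rcases le_or_gt j (n + 1) with hj | hj
  · have pascal_low := congrArg (Nat.cast : ℕ → R) (Nat.add_one_mul_choose_eq n j)
    have pascal_high := congrArg (Nat.cast : ℕ → R) (Nat.choose_mul_succ_eq (n + 1) (j + 1))
    rw [show n + 1 + 1 - (j + 1) = n + 1 - j by omega, show n + 1 + 1 = n + 2 by rfl]
      at pascal_high
    push_cast [Nat.cast_sub hj] at pascal_low pascal_high
    linear_combination (-(j : R) - 1) * pascal_high - (n + 2) * pascal_low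
  · simp [Nat.choose_eq_zero_of_lt (by omega : n < j),
      Nat.choose_eq_zero_of_lt (by omega : n + 2 < j + 1)]

noncomputable def oddBinomSum (ℓ : ℕ) : ℝ :=
  ∑ k ∈ range ℓ, ((2 * ℓ).choose (ℓ + 2 * k + 1) : ℝ) / (2 * k + 1) ^ 2

theorem oddBinomSum_eq {ℓ : ℕ} (hℓ : 1 ≤ ℓ) :
    ∑ k ∈ range ((ℓ - 1) / 2 + 1), ((2 * ℓ).choose (ℓ - 2 * k - 1) : ℝ) / (2 * (k : ℝ) + 1) ^ 2 =
      oddBinomSum ℓ := by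
  have range_subset : range ((ℓ - 1) / 2 + 1) ⊆ range ℓ := range_subset_range.mpr (by omega)
  rw [oddBinomSum, ← sum_subset range_subset]
  · refine sum_congr rfl fun k hk => ?_
    rw [mem_range] at hk
    rw [← Nat.choose_symm (by omega : ℓ - 2 * k - 1 ≤ 2 * ℓ),
      show 2 * ℓ - (ℓ - 2 * k - 1) = ℓ + 2 * k + 1 by omega]
  · intro k _ hk
    rw [mem_range] at hk
    rw [Nat.choose_eq_zero_of_lt (by omega), Nat.cast_zero, zero_div]

theorem oddBinomSum_succ (ℓ : ℕ) :
    ((ℓ : ℝ) + 1) ^ 2 * oddBinomSum (ℓ + 1) =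
      (2 * ℓ + 2) * (2 * ℓ + 1) * oddBinomSum ℓ + 4 ^ ℓ := by
  have term (k : ℕ) :
      ((ℓ : ℝ) + 1) ^ 2 * ((2 * (ℓ + 1)).choose (ℓ + 1 + 2 * k + 1) / (2 * k + 1) ^ 2) =
        (2 * ℓ + 2) * (2 * ℓ + 1) * ((2 * ℓ).choose (ℓ + 2 * k + 1) / (2 * k + 1) ^ 2) +
          (2 * ℓ + 2).choose (ℓ + 2 * k + 2) := by
    have h := sub_mul_add_one_mul_choose_add_two (R := ℝ) (2 * ℓ) (ℓ + 2 * k + 1)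
    rw [show 2 * (ℓ + 1) = 2 * ℓ + 2 by ring, show ℓ + 1 + 2 * k + 1 = ℓ + 2 * k + 2 by ring]
    push_cast at h ⊢
    field_simp
    linear_combination h
  have last_term_vanishes : (2 * ℓ).choose (ℓ + 2 * ℓ + 1) = 0 :=
    Nat.choose_eq_zero_of_lt (by omega)
  rw [oddBinomSum, oddBinomSum, mul_sum, sum_congr rfl fun k _ => term k, sum_add_distrib,
    ← mul_sum, sum_range_succ _ ℓ, last_term_vanishes, ← Nat.cast_sum,
    sum_range_choose_add_two_mul_add_two]
  push_cast
  ring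

theorem four_mul_oddBinomSum (ℓ : ℕ) :
    4 * oddBinomSum ℓ = (2 * ℓ).choose ℓ *
      ∑ j ∈ Icc 1 ℓ, (4 : ℝ) ^ j / ((2 * j).choose j * (j : ℝ) ^ 2) := by
  induction ℓ with
  | zero => simp [oddBinomSum]
  | succ ℓ ih =>
    have central : ((ℓ : ℝ) + 1) * (2 * (ℓ + 1)).choose (ℓ + 1) =
        2 * (2 * ℓ + 1) * (2 * ℓ).choose ℓ := by
      exact_mod_cast Nat.succ_mul_centralBinom_succ ℓ
    have central_ne_zero : ((2 * (ℓ + 1)).choose (ℓ + 1) : ℝ) ≠ 0 :=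
      Nat.cast_ne_zero.mpr (Nat.choose_pos (by omega)).ne'
    rw [sum_Icc_succ_top (by omega), mul_add]
    set T := ∑ j ∈ Icc 1 ℓ, (4 : ℝ) ^ j / ((2 * j).choose j * (j : ℝ) ^ 2)
    push_cast
    field_simp
    linear_combination
      4 * oddBinomSum_succ ℓ + 2 * (2 * ℓ + 1) * (ℓ + 1) * ih - (ℓ + 1) * T * central

theorem binom_sum_identity (ℓ : ℕ) (hℓ : 1 ≤ ℓ) :
    4 * ∑ k ∈ Finset.range ((ℓ - 1) / 2 + 1),
        (Nat.choose (2 * ℓ) (ℓ - 2 * k - 1) : ℝ) / (2 * (k : ℝ) + 1) ^ 2 =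
      (Nat.choose (2 * ℓ) ℓ : ℝ) *
        ∑ j ∈ Finset.Icc 1 ℓ,
          (4 : ℝ) ^ j / ((Nat.choose (2 * j) j : ℝ) * (j : ℝ) ^ 2) := by
  rw [oddBinomSum_eq hℓ]
  exact four_mul_oddBinomSum ℓ
end

section
/- For every integer ℓ ≥ 1, Σ_{k=0}^{ℓ} binom(2ℓ+1, ℓ-k) / (2k+1)^2 = (4^{2ℓ} / (binom(2ℓ, ℓ) · (2ℓ+1))) · Σ_{j=0}^{ℓ} binom(2j, j) / (4^j · (2j+1)). -/
/-!
Induction on `ℓ`: both sides satisfy `x (n+1) = 8(n+1)/(2n+3) · x n + 4^(n+1)/(2n+3)^2`.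
On the right this is the recursion `(n+1) C(2n+2, n+1) = 2(2n+1) C(2n, n)`. On the left it holds
term by term: the factor `(n+1-k)(n+2+k)` relating `C(2n+3, n+1-k)` to `C(2n+1, n-k)` is
`((2n+3)^2 - (2k+1)^2)/4`, so dividing by `(2k+1)^2` splits off `C(2n+3, n+1-k)/(2n+3)^2`, and
these split-off terms sum to `4^(n+1)/(2n+3)^2` because half of the row `2n+3` sums to `4^(n+1)`.
-/

open Finset

theorem Nat.add_two_mul_add_one_mul_choose_eq (N m : ℕ) :
    (N + 2) * (N + 1) * N.choose m = (N + 2).choose (m + 1) * ((m + 1) * (N + 1 - m)) := by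
  have hsub : N + 1 + 1 - (m + 1) = N + 1 - m := by omega
  calc (N + 2) * (N + 1) * N.choose m = (N + 1).choose (m + 1) * (N + 1 + 1) * (m + 1) := by
        rw [mul_assoc, Nat.add_one_mul_choose_eq]; ring
    _ = (N + 2).choose (m + 1) * ((m + 1) * (N + 1 - m)) := by
        rw [Nat.choose_mul_succ_eq, hsub]; ring

theorem Nat.sum_range_choose_sub_halfway (ℓ : ℕ) :
    ∑ k ∈ range (ℓ + 1), (2 * ℓ + 1).choose (ℓ - k) = 4 ^ ℓ := by
  rw [← Nat.sum_range_choose_halfway ℓ, ← sum_range_reflect]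
  refine sum_congr rfl fun k hk => ?_
  rw [Nat.add_sub_cancel, Nat.sub_sub_self (mem_range_succ_iff.mp hk)]

theorem choose_div_odd_sq_eq (n k : ℕ) (hk : k ≤ n) :
    ((2 * (n + 1) + 1).choose (n + 1 - k) : ℝ) / (2 * k + 1) ^ 2 =
      ((2 * (n + 1) + 1).choose (n + 1 - k) : ℝ) / (2 * n + 3) ^ 2 +
        8 * ((n : ℝ) + 1) / (2 * n + 3) *
          (((2 * n + 1).choose (n - k) : ℝ) / (2 * k + 1) ^ 2) := by
  obtain ⟨j, rfl⟩ := Nat.exists_eq_add_of_le hk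
  have hchoose := Nat.add_two_mul_add_one_mul_choose_eq (2 * (k + j) + 1) j
  rw [show 2 * (k + j) + 1 + 2 = 2 * (k + j + 1) + 1 by ring,
    show 2 * (k + j) + 1 + 1 - j = 2 * k + j + 2 by omega] at hchoose
  rw [show k + j + 1 - k = j + 1 by omega, Nat.add_sub_cancel_left]
  have hchoose' := congrArg (Nat.cast : ℕ → ℝ) hchoose
  push_cast at hchoose' ⊢
  field_simp
  linear_combination -4 * hchoose'

theorem sum_choose_div_odd_sq_succ (n : ℕ) :
    ∑ k ∈ range (n + 1 + 1), ((2 * (n + 1) + 1).choose (n + 1 - k) : ℝ) / (2 * k + 1) ^ 2 =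
      8 * ((n : ℝ) + 1) / (2 * n + 3) *
          ∑ k ∈ range (n + 1), ((2 * n + 1).choose (n - k) : ℝ) / (2 * k + 1) ^ 2 +
        4 ^ (n + 1) / (2 * n + 3) ^ 2 := by
  have hsum :
      ∑ k ∈ range (n + 1), ((2 * (n + 1) + 1).choose (n + 1 - k) : ℝ) = 4 ^ (n + 1) - 1 := by
    have h := congrArg (Nat.cast : ℕ → ℝ) (Nat.sum_range_choose_sub_halfway (n + 1))
    rw [sum_range_succ] at h
    push_cast at h
    simp only [Nat.sub_self, Nat.choose_zero_right, Nat.cast_one] at h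
    linarith
  rw [sum_range_succ, sum_congr rfl fun k hk => choose_div_odd_sq_eq n k (mem_range_succ_iff.mp hk),
    sum_add_distrib, ← sum_div, hsum, ← mul_sum]
  simp only [Nat.sub_self, Nat.choose_zero_right, Nat.cast_one, Nat.cast_add]
  field_simp
  ring

theorem four_pow_div_centralBinom_succ (n : ℕ) :
    (4 : ℝ) ^ (2 * (n + 1)) / ((2 * (n + 1)).choose (n + 1) * (2 * (n + 1 : ℕ) + 1)) =
      8 * ((n : ℝ) + 1) / (2 * n + 3) * (4 ^ (2 * n) / ((2 * n).choose n * (2 * n + 1))) := by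
  have h := congrArg (Nat.cast : ℕ → ℝ) (Nat.succ_mul_centralBinom_succ n)
  simp only [Nat.centralBinom] at h
  push_cast at h ⊢
  have hc : ((2 * n).choose n : ℝ) ≠ 0 := by exact_mod_cast (Nat.choose_pos (by omega)).ne'
  have hc' : ((2 * (n + 1)).choose (n + 1) : ℝ) ≠ 0 := by
    exact_mod_cast (Nat.choose_pos (by omega)).ne'
  field_simp
  linear_combination -(8 * (2 * (n : ℝ) + 3) * 4 ^ (2 * n)) * h

theorem binom_sum_identity'_general (ℓ : ℕ) :
    ∑ k ∈ Finset.range (ℓ + 1),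
        (Nat.choose (2 * ℓ + 1) (ℓ - k) : ℝ) / (2 * (k : ℝ) + 1) ^ 2 =
      (4 : ℝ) ^ (2 * ℓ) / ((Nat.choose (2 * ℓ) ℓ : ℝ) * (2 * (ℓ : ℝ) + 1)) *
        ∑ j ∈ Finset.range (ℓ + 1),
          (Nat.choose (2 * j) j : ℝ) / ((4 : ℝ) ^ j * (2 * (j : ℝ) + 1)) := by
  induction ℓ with
  | zero => norm_num
  | succ n ih =>
    rw [sum_choose_div_odd_sq_succ, ih, sum_range_succ _ (n + 1), mul_add ((4 : ℝ) ^ _ / _)]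
    congr 1
    · rw [four_pow_div_centralBinom_succ, mul_assoc]
    · have hc : ((2 * (n + 1)).choose (n + 1) : ℝ) ≠ 0 := by
        exact_mod_cast (Nat.choose_pos (by omega)).ne'
      push_cast
      field_simp
      ring

theorem binom_sum_identity' (ℓ : ℕ) (hℓ : 1 ≤ ℓ) :
    ∑ k ∈ Finset.range (ℓ + 1),
        (Nat.choose (2 * ℓ + 1) (ℓ - k) : ℝ) / (2 * (k : ℝ) + 1) ^ 2 =
      (4 : ℝ) ^ (2 * ℓ) / ((Nat.choose (2 * ℓ) ℓ : ℝ) * (2 * (ℓ : ℝ) + 1)) *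
        ∑ j ∈ Finset.range (ℓ + 1),
          (Nat.choose (2 * j) j : ℝ) / ((4 : ℝ) ^ j * (2 * (j : ℝ) + 1)) :=
  binom_sum_identity'_general ℓ
end

section
/- The infinite series Σ_{j=1}^{∞} 4^j / (binom(2j,j) · j^2) converges and equals π²/2. -/
/-!
Since `∫₀¹ (1 - u²)ⁿ du = 4ⁿ / ((2n + 1) binom(2n, n))`, the `j = n + 1` term of the series is
`∫₀¹ 2 (1 - u²)ⁿ / (n + 1) du`. Summing the logarithmic series `Σ xⁿ / (n + 1) = -log (1 - x) / x`
at `x = 1 - u²` under the integral turns the series into `∫₀¹ -4 log u / (1 - u²) du`. Expanding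
`1 / (1 - u²)` geometrically instead, and using `∫₀¹ u^(2k) log u du = -1 / (2k + 1)²`, turns the
same integral into `4 Σ 1 / (2k + 1)² = π² / 2`. All functions involved are nonnegative, so both
interchanges of sum and integral are monotone convergence for lower Lebesgue integrals.
-/

open Real Set MeasureTheory Filter Topology intervalIntegral
open scoped NNReal

theorem hasSum_iff_tsum_ofReal_eq {ι : Type*} {b : ι → ℝ} (hb : ∀ i, 0 ≤ b i) {a : ℝ}
    (ha : 0 ≤ a) : HasSum b a ↔ ∑' i, ENNReal.ofReal (b i) = ENNReal.ofReal a := by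
  lift b to ι → ℝ≥0 using hb
  lift a to ℝ≥0 using ha
  simp only [ENNReal.ofReal_coe_nnreal, NNReal.hasSum_coe, ← ENNReal.hasSum_coe,
    ENNReal.summable.hasSum_iff]

theorem hasSum_integral_iff_lintegral_ofReal_eq {α ι : Type*} [MeasurableSpace α] [Countable ι]
    {μ : Measure α} {f : ι → α → ℝ} {F : α → ℝ} (hf : ∀ i, Integrable (f i) μ)
    (hf₀ : ∀ i, 0 ≤ᵐ[μ] f i) (hF : ∀ᵐ x ∂μ, HasSum (f · x) (F x)) {a : ℝ} (ha : 0 ≤ a) :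
    HasSum (fun i ↦ ∫ x, f i x ∂μ) a ↔ ∫⁻ x, ENNReal.ofReal (F x) ∂μ = ENNReal.ofReal a := by
  have hlint : ∫⁻ x, ENNReal.ofReal (F x) ∂μ = ∑' i, ENNReal.ofReal (∫ x, f i x ∂μ) := calc
    ∫⁻ x, ENNReal.ofReal (F x) ∂μ = ∫⁻ x, ∑' i, ENNReal.ofReal (f i x) ∂μ := by
      refine lintegral_congr_ae ?_
      filter_upwards [hF, ae_all_iff.2 hf₀] with x hx hx₀
      rw [← ENNReal.ofReal_tsum_of_nonneg hx₀ hx.summable, hx.tsum_eq]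
    _ = ∑' i, ∫⁻ x, ENNReal.ofReal (f i x) ∂μ :=
      lintegral_tsum fun i ↦ (hf i).aemeasurable.ennreal_ofReal
    _ = ∑' i, ENNReal.ofReal (∫ x, f i x ∂μ) := by
      simp_rw [ofReal_integral_eq_lintegral_ofReal (hf _) (hf₀ _)]
  rw [hlint]
  exact hasSum_iff_tsum_ofReal_eq (fun i ↦ integral_nonneg_of_ae (hf₀ i)) ha

theorem hasSum_pow_div_succ {x : ℝ} (hx₀ : x ≠ 0) (hx : |x| < 1) :
    HasSum (fun n : ℕ ↦ x ^ n / (n + 1)) (-log (1 - x) / x) := by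
  refine ((hasSum_pow_div_log_of_abs_lt_one hx).div_const x).congr_fun fun n ↦ ?_
  field_simp
  ring

theorem hasSum_one_div_odd_sq : HasSum (fun k : ℕ ↦ 1 / (2 * k + 1 : ℝ) ^ 2) (π ^ 2 / 8) := by
  set f : ℕ → ℝ := fun n ↦ 1 / (n : ℝ) ^ 2
  have heven : HasSum (fun k ↦ f (2 * k)) (π ^ 2 / 24) := by
    have hf : (fun k ↦ f (2 * k)) = fun k ↦ 1 / 4 * f k := by
      ext k; simp only [f]; push_cast; ring
    rw [hf, show π ^ 2 / 24 = 1 / 4 * (π ^ 2 / 6) by ring]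
    exact hasSum_zeta_two.mul_left _
  have hodd : Summable (fun k ↦ f (2 * k + 1)) :=
    hasSum_zeta_two.summable.comp_injective fun a b h ↦ by omega
  have htot := (heven.even_add_odd hodd.hasSum).unique hasSum_zeta_two
  convert hodd.hasSum using 1
  · ext k; simp only [f]; push_cast; ring
  · linarith

theorem integral_one_sub_sq_pow_succ (n : ℕ) :
    (2 * (n : ℝ) + 3) * ∫ x in (0 : ℝ)..1, (1 - x ^ 2) ^ (n + 1)
      = (2 * (n : ℝ) + 2) * ∫ x in (0 : ℝ)..1, (1 - x ^ 2) ^ n := by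
  have hderiv : ∀ x ∈ uIcc (0 : ℝ) 1, HasDerivAt (fun x : ℝ ↦ x * (1 - x ^ 2) ^ (n + 1))
      ((2 * n + 3) * (1 - x ^ 2) ^ (n + 1) - (2 * n + 2) * (1 - x ^ 2) ^ n) x := by
    intro x _
    refine ((hasDerivAt_id' x).mul
      (((hasDerivAt_pow 2 x).const_sub 1).pow (n + 1))).congr_deriv ?_
    simp only [Pi.pow_apply]
    push_cast
    ring
  have hint (m : ℕ) : IntervalIntegrable (fun x : ℝ ↦ (1 - x ^ 2) ^ m) volume 0 1 :=
    (by fun_prop : Continuous fun x : ℝ ↦ (1 - x ^ 2) ^ m).intervalIntegrable 0 1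
  have hftc := integral_eq_sub_of_hasDerivAt hderiv
    (((hint _).const_mul _).sub ((hint _).const_mul _))
  rw [integral_sub ((hint _).const_mul _) ((hint _).const_mul _),
    intervalIntegral.integral_const_mul, intervalIntegral.integral_const_mul] at hftc
  norm_num at hftc
  linarith

theorem cast_centralBinom_succ (n : ℕ) :
    ((n + 1).centralBinom : ℝ) = 2 * (2 * n + 1) * n.centralBinom / (n + 1) := by
  rw [eq_div_iff n.cast_add_one_ne_zero, mul_comm]
  exact_mod_cast Nat.succ_mul_centralBinom_succ n

theorem integral_one_sub_sq_pow (n : ℕ) :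
    ∫ x in (0 : ℝ)..1, (1 - x ^ 2) ^ n = 4 ^ n / ((2 * n + 1) * n.centralBinom : ℝ) := by
  induction n with
  | zero => simp
  | succ n ih =>
    have hrec := integral_one_sub_sq_pow_succ n
    have hC : (n.centralBinom : ℝ) ≠ 0 := Nat.cast_ne_zero.2 n.centralBinom_ne_zero
    rw [ih] at hrec
    rw [cast_centralBinom_succ]
    push_cast
    field_simp at hrec ⊢
    linear_combination 2 * hrec

theorem four_pow_succ_div_choose_eq_integral (n : ℕ) :
    (4 : ℝ) ^ (n + 1) / ((Nat.choose (2 * (n + 1)) (n + 1) : ℝ) * ((n : ℝ) + 1) ^ 2)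
      = ∫ x in (0 : ℝ)..1, 2 * (1 - x ^ 2) ^ n / (n + 1) := by
  have hC : (n.centralBinom : ℝ) ≠ 0 := Nat.cast_ne_zero.2 n.centralBinom_ne_zero
  rw [← Nat.centralBinom_eq_two_mul_choose, cast_centralBinom_succ, intervalIntegral.integral_div,
    intervalIntegral.integral_const_mul, integral_one_sub_sq_pow]
  field_simp
  ring

theorem intervalIntegrable_pow_mul_log (k : ℕ) (a b : ℝ) :
    IntervalIntegrable (fun x ↦ x ^ k * log x) volume a b :=
  intervalIntegrable_log'.continuousOn_mul (continuous_pow k).continuousOn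

theorem integral_pow_mul_log (k : ℕ) :
    ∫ x in (0 : ℝ)..1, x ^ k * log x = -1 / (k + 1) ^ 2 := by
  have hk : (k : ℝ) + 1 ≠ 0 := k.cast_add_one_ne_zero
  set G : ℝ → ℝ := fun x ↦ x ^ (k + 1) * log x / (k + 1) - x ^ (k + 1) / (k + 1) ^ 2
  have hderiv : ∀ x ∈ Ioo (0 : ℝ) 1, HasDerivAt G (x ^ k * log x) x := by
    intro x hx
    have hx₀ : x ≠ 0 := hx.1.ne'
    refine ((((hasDerivAt_pow (k + 1) x).mul (hasDerivAt_log hx₀)).div_const _).sub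
      ((hasDerivAt_pow (k + 1) x).div_const _)).congr_deriv ?_
    push_cast
    field_simp
    ring
  have hG₀ : Tendsto G (𝓝[>] 0) (𝓝 0) := by
    have hpow_log : Tendsto (fun x : ℝ ↦ x ^ (k + 1) * log x) (𝓝[>] 0) (𝓝 0) := by
      refine (tendsto_log_mul_rpow_nhdsGT_zero (r := k + 1) (by positivity)).congr' ?_
      filter_upwards [self_mem_nhdsWithin] with x (hx : 0 < x)
      rw [mul_comm, ← rpow_natCast]
      push_cast
      rfl
    have hpow : Tendsto (fun x : ℝ ↦ x ^ (k + 1) / (k + 1) ^ 2) (𝓝[>] 0) (𝓝 0) := by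
      simpa using ((continuous_pow (k + 1)).div_const ((k + 1 : ℝ) ^ 2)).continuousWithinAt
        (s := Ioi 0) (x := 0) |>.tendsto
    simpa using (hpow_log.div_const ((k : ℝ) + 1)).sub hpow
  have hG₁ : Tendsto G (𝓝[<] 1) (𝓝 (-1 / (k + 1) ^ 2)) := by
    have : ContinuousAt G 1 := by
      have : ContinuousAt log 1 := continuousAt_log one_ne_zero
      fun_prop
    simpa [G, neg_div] using this.tendsto.mono_left nhdsWithin_le_nhds
  rw [integral_eq_sub_of_hasDerivAt_of_tendsto zero_lt_one hderiv
    (intervalIntegrable_pow_mul_log k 0 1) hG₀ hG₁, sub_zero]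

theorem hasSum_two_mul_one_sub_sq_pow_div {u : ℝ} (hu₀ : u ≠ 0) (hu : |u| < 1) :
    HasSum (fun n : ℕ ↦ 2 * (1 - u ^ 2) ^ n / (n + 1)) (-4 * log u / (1 - u ^ 2)) := by
  have hpos : 0 < u ^ 2 := by positivity
  have hlt : u ^ 2 < 1 := (sq_lt_one_iff_abs_lt_one u).2 hu
  have h := (hasSum_pow_div_succ (x := 1 - u ^ 2) (by linarith)
    (abs_lt.2 ⟨by linarith, by linarith⟩)).mul_left 2
  rw [sub_sub_cancel, log_pow, Nat.cast_ofNat] at h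
  rw [show -4 * log u / (1 - u ^ 2) = 2 * (-(2 * log u) / (1 - u ^ 2)) by ring]
  exact h.congr_fun fun n ↦ by ring

theorem hasSum_neg_four_mul_pow_mul_log {u : ℝ} (hu : |u| < 1) :
    HasSum (fun k : ℕ ↦ -4 * (u ^ (2 * k) * log u)) (-4 * log u / (1 - u ^ 2)) := by
  have h := (hasSum_geometric_of_lt_one (sq_nonneg u)
    ((sq_lt_one_iff_abs_lt_one u).2 hu)).mul_left (-4 * log u)
  rw [div_eq_mul_inv]
  exact h.congr_fun fun k ↦ by rw [pow_mul]; ring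

theorem lintegral_neg_four_mul_log_div_one_sub_sq :
    ∫⁻ u in Ioo (0 : ℝ) 1, ENNReal.ofReal (-4 * log u / (1 - u ^ 2))
      = ENNReal.ofReal (π ^ 2 / 2) := by
  have hint (k : ℕ) :
      Integrable (fun u ↦ -4 * (u ^ (2 * k) * log u)) (volume.restrict (Ioo 0 1)) :=
    ((intervalIntegrable_pow_mul_log (2 * k) 0 1).const_mul (-4)).1.mono_set Ioo_subset_Ioc_self
  have hnonneg (k : ℕ) :
      0 ≤ᵐ[volume.restrict (Ioo 0 1)] fun u : ℝ ↦ -4 * (u ^ (2 * k) * log u) :=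
    ae_restrict_of_forall_mem measurableSet_Ioo fun u hu ↦ by
      have := mul_nonpos_of_nonneg_of_nonpos (pow_nonneg hu.1.le (2 * k))
        (log_nonpos hu.1.le hu.2.le)
      simp only [Pi.zero_apply]
      linarith
  have hsum : ∀ᵐ (u : ℝ) ∂volume.restrict (Ioo 0 1),
      HasSum (fun k : ℕ ↦ -4 * (u ^ (2 * k) * log u)) (-4 * log u / (1 - u ^ 2)) :=
    ae_restrict_of_forall_mem measurableSet_Ioo fun u hu ↦
      hasSum_neg_four_mul_pow_mul_log (abs_lt.2 ⟨by linarith [hu.1], hu.2⟩)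
  refine (hasSum_integral_iff_lintegral_ofReal_eq hint hnonneg hsum (by positivity)).1 ?_
  rw [show π ^ 2 / 2 = 4 * (π ^ 2 / 8) by ring]
  refine (hasSum_one_div_odd_sq.mul_left 4).congr_fun fun k ↦ ?_
  rw [← integral_Ioc_eq_integral_Ioo, ← integral_of_le zero_le_one,
    intervalIntegral.integral_const_mul, integral_pow_mul_log]
  push_cast
  ring

theorem central_binom_series_pi_sq :
    HasSum
      (fun j : ℕ =>
        (4 : ℝ) ^ (j + 1) /
          ((Nat.choose (2 * (j + 1)) (j + 1) : ℝ) * ((j : ℝ) + 1) ^ 2))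
      (Real.pi ^ 2 / 2) := by
  have hint (n : ℕ) :
      Integrable (fun u : ℝ ↦ 2 * (1 - u ^ 2) ^ n / (n + 1)) (volume.restrict (Ioo 0 1)) :=
    (by fun_prop : Continuous fun u : ℝ ↦ 2 * (1 - u ^ 2) ^ n / (n + 1)).integrableOn_Icc.mono_set
      Ioo_subset_Icc_self
  have hnonneg (n : ℕ) :
      0 ≤ᵐ[volume.restrict (Ioo 0 1)] fun u : ℝ ↦ 2 * (1 - u ^ 2) ^ n / (n + 1) :=
    ae_restrict_of_forall_mem measurableSet_Ioo fun u hu ↦ by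
      have : 0 ≤ 1 - u ^ 2 := by nlinarith [hu.1, hu.2]
      simp only [Pi.zero_apply]
      positivity
  have hsum : ∀ᵐ (u : ℝ) ∂volume.restrict (Ioo 0 1),
      HasSum (fun n : ℕ ↦ 2 * (1 - u ^ 2) ^ n / (n + 1)) (-4 * log u / (1 - u ^ 2)) :=
    ae_restrict_of_forall_mem measurableSet_Ioo fun u hu ↦
      hasSum_two_mul_one_sub_sq_pow_div hu.1.ne' (abs_lt.2 ⟨by linarith [hu.1], hu.2⟩)
  refine ((hasSum_integral_iff_lintegral_ofReal_eq hint hnonneg hsum (by positivity)).2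
    lintegral_neg_four_mul_log_div_one_sub_sq).congr_fun fun n ↦ ?_
  rw [four_pow_succ_div_choose_eq_integral, integral_of_le zero_le_one,
    integral_Ioc_eq_integral_Ioo]
end

section
/- The infinite series Σ_{k=0}^{∞} binom(2k,k) / (8^k · (2k+2)) converges and equals 2 - √2. -/
/-!
Since `binom(2k, k) / (2k + 2) = catalan k / 2`, the series is half the Catalan generating
function `C(x) = ∑ catalan k * x ^ k` at `x = 1/8`. Catalan's recursion is a Cauchy product
identity, so `C = 1 + x C²`; at `x = 1/8` this gives `C = 4 ± 2√2`, and comparison with the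
geometric series (`catalan k ≤ 4 ^ k`) gives `C ≤ 2`, which selects `C = 4 - 2√2`.
-/

open Finset

theorem catalan_le_four_pow (n : ℕ) : catalan n ≤ 4 ^ n :=
  calc catalan n ≤ (n + 1) * catalan n := Nat.le_mul_of_pos_left _ n.succ_pos
    _ = n.centralBinom := succ_mul_catalan_eq_centralBinom n
    _ ≤ 4 ^ n := Nat.centralBinom_le_four_pow n

section CatalanGF

variable {𝕜 : Type*} [RCLike 𝕜]

noncomputable def catalanGF (x : 𝕜) : 𝕜 := ∑' k, (catalan k : 𝕜) * x ^ k

theorem summable_norm_catalan_mul_pow {x : 𝕜} (hx : ‖x‖ < 1 / 4) :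
    Summable fun k => ‖(catalan k : 𝕜) * x ^ k‖ := by
  refine .of_nonneg_of_le (fun _ => norm_nonneg _) (fun k => ?_)
    (summable_geometric_of_lt_one (r := 4 * ‖x‖) (by positivity) (by linarith))
  rw [norm_mul, norm_pow, RCLike.norm_natCast, mul_pow]
  gcongr
  exact_mod_cast catalan_le_four_pow k

theorem catalanGF_eq_one_add_mul_sq {x : 𝕜} (hx : ‖x‖ < 1 / 4) :
    catalanGF x = 1 + x * catalanGF x ^ 2 := by
  have hs := summable_norm_catalan_mul_pow hx
  have hprod : catalanGF x ^ 2 =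
      ∑' n, ∑ ij ∈ antidiagonal n, (catalan ij.1 : 𝕜) * x ^ ij.1 * (catalan ij.2 * x ^ ij.2) := by
    rw [sq, catalanGF, tsum_mul_tsum_eq_tsum_sum_antidiagonal_of_summable_norm hs hs]
  have hconv (n : ℕ) :
      ∑ ij ∈ antidiagonal n, (catalan ij.1 : 𝕜) * x ^ ij.1 * (catalan ij.2 * x ^ ij.2) =
        catalan (n + 1) * x ^ n := by
    rw [catalan_succ', Nat.cast_sum, sum_mul]
    refine sum_congr rfl fun ij hij => ?_
    rw [← mem_antidiagonal.mp hij]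
    push_cast
    ring
  rw [hprod, catalanGF, hs.of_norm.tsum_eq_zero_add, tsum_congr hconv, ← tsum_mul_left]
  simp only [catalan_zero, Nat.cast_one, pow_zero, mul_one]
  congr 2 with n
  ring

theorem hasSum_catalanGF {x : 𝕜} (hx : ‖x‖ < 1 / 4) :
    HasSum (fun k => (catalan k : 𝕜) * x ^ k) (catalanGF x) :=
  (summable_norm_catalan_mul_pow hx).of_norm.hasSum

end CatalanGF

theorem catalanGF_le_inv_one_sub {x : ℝ} (hx₀ : 0 ≤ x) (hx : x < 1 / 4) :
    catalanGF x ≤ (1 - 4 * x)⁻¹ := by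
  refine hasSum_le (fun k => ?_) (hasSum_catalanGF (by rwa [Real.norm_of_nonneg hx₀]))
    (hasSum_geometric_of_lt_one (by positivity) (by linarith))
  rw [mul_pow]
  gcongr
  exact_mod_cast catalan_le_four_pow k

theorem hasSum_catalan_mul_one_div_eight_pow :
    HasSum (fun k => (catalan k : ℝ) * (1 / 8) ^ k) (4 - 2 * √2) := by
  have hx : ‖(1 / 8 : ℝ)‖ < 1 / 4 := by norm_num
  set C := catalanGF (1 / 8 : ℝ)
  have hquad : C = 1 + 1 / 8 * C ^ 2 := catalanGF_eq_one_add_mul_sq hx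
  have hC : C ≤ 2 := (catalanGF_le_inv_one_sub (by norm_num) (by norm_num)).trans_eq (by norm_num)
  have hsq : (4 - C) ^ 2 = (2 * √2) ^ 2 := by
    rw [mul_pow, Real.sq_sqrt zero_le_two]; linarith
  have hroot : 4 - C = 2 * √2 := (sq_eq_sq₀ (by linarith) (by positivity)).mp hsq
  rw [← hroot, sub_sub_cancel]
  exact hasSum_catalanGF hx

theorem choose_two_mul_div_eq_catalan_div_two (k : ℕ) :
    ((2 * k).choose k : ℝ) / (2 * k + 2) = catalan k / 2 := by
  rw [← Nat.centralBinom_eq_two_mul_choose, ← succ_mul_catalan_eq_centralBinom]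
  push_cast
  field_simp

theorem central_binom_series_sqrt_two :
    HasSum
      (fun k : ℕ =>
        (Nat.choose (2 * k) k : ℝ) / (8 ^ k * (2 * (k : ℝ) + 2)))
      (2 - Real.sqrt 2) := by
  have hterm (k : ℕ) :
      ((2 * k).choose k : ℝ) / (8 ^ k * (2 * k + 2)) = catalan k * (1 / 8) ^ k / 2 := by
    rw [mul_comm (8 ^ k : ℝ), ← div_div, choose_two_mul_div_eq_catalan_div_two, one_div_pow]
    ring
  rw [funext hterm, show 2 - √2 = (4 - 2 * √2) / 2 by ring]
  exact hasSum_catalan_mul_one_div_eight_pow.div_const 2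
end

section
/- The infinite series Σ_{k=1}^{∞} 2^k / (binom(2k,k) · 2k · (2k+1)) converges and equals 1 - π/4. -/
/-!
Since `∫₀¹ xⁿ (1 - x)ⁿ dx = n!² / (2n + 1)!`, the `n`-th term is `(1 / 2n) ∫₀¹ (2x(1 - x))ⁿ dx`.
As `0 ≤ 2x(1 - x) ≤ 1/2` on `[0, 1]`, the logarithmic series may be summed under the integral,
which leaves `∫₀¹ -log (1 - 2x(1 - x)) / 2 dx`; an explicit primitive evaluates it to `1 - π/4`.
-/

open Real intervalIntegral Set
open scoped Nat

lemma hasDerivAt_pow_mul_one_sub_pow (a b : ℕ) (x : ℝ) :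
    HasDerivAt (fun x : ℝ => x ^ (a + 1) * (1 - x) ^ (b + 1))
      ((a + 1) * (x ^ a * (1 - x) ^ (b + 1)) - (b + 1) * (x ^ (a + 1) * (1 - x) ^ b)) x := by
  refine ((hasDerivAt_pow (a + 1) x).fun_mul
    (((hasDerivAt_id' x).const_sub 1).fun_pow (b + 1))).congr_deriv ?_
  push_cast
  ring

lemma integral_pow_mul_one_sub_pow_succ (a b : ℕ) :
    ∫ x in (0 : ℝ)..1, x ^ a * (1 - x) ^ (b + 1)
      = (b + 1) / (a + 1) * ∫ x in (0 : ℝ)..1, x ^ (a + 1) * (1 - x) ^ b := by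
  have h := integral_eq_sub_of_hasDerivAt (fun x _ => hasDerivAt_pow_mul_one_sub_pow a b x)
    (a := 0) (b := 1) (by apply Continuous.intervalIntegrable; fun_prop)
  rw [integral_sub (by apply Continuous.intervalIntegrable; fun_prop)
    (by apply Continuous.intervalIntegrable; fun_prop), integral_const_mul,
    integral_const_mul] at h
  simp only [one_pow, sub_self, zero_pow (Nat.succ_ne_zero _), mul_zero, sub_zero] at h
  field_simp
  linarith

theorem integral_pow_mul_one_sub_pow (a b : ℕ) :
    ∫ x in (0 : ℝ)..1, x ^ a * (1 - x) ^ b = a ! * b ! / (a + b + 1)! := by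
  induction b generalizing a with
  | zero => simp [integral_pow, Nat.factorial_succ]; field_simp
  | succ b ih =>
    rw [integral_pow_mul_one_sub_pow_succ, ih, show a + 1 + b + 1 = a + (b + 1) + 1 by omega]
    push_cast [Nat.factorial_succ]
    field_simp

lemma integral_two_mul_mul_one_sub_pow (n : ℕ) :
    ∫ x in (0 : ℝ)..1, (2 * x * (1 - x)) ^ n = 2 ^ n / ((2 * n).choose n * (2 * n + 1)) := by
  simp_rw [mul_assoc, mul_pow, integral_const_mul, integral_pow_mul_one_sub_pow, two_mul,
    Nat.cast_add_choose, Nat.factorial_succ]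
  push_cast
  field_simp

lemma two_mul_mul_one_sub_mem_Icc {x : ℝ} (hx : x ∈ Icc (0 : ℝ) 1) :
    2 * x * (1 - x) ∈ Icc (0 : ℝ) (1 / 2) := by
  obtain ⟨h0, h1⟩ := hx
  constructor <;> nlinarith [sq_nonneg (2 * x - 1)]

lemma hasSum_two_mul_mul_one_sub_pow_div {x : ℝ} (hx : x ∈ Icc (0 : ℝ) 1) :
    HasSum (fun k : ℕ => (2 * x * (1 - x)) ^ (k + 1) / (2 * ((k : ℝ) + 1)))
      (-log (1 - 2 * x * (1 - x)) / 2) := by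
  obtain ⟨hy0, hy1⟩ := two_mul_mul_one_sub_mem_Icc hx
  have hy : |2 * x * (1 - x)| < 1 := by rw [abs_of_nonneg hy0]; linarith
  have h := (hasSum_pow_div_log_of_abs_lt_one hy).div_const 2
  simp only [div_div, mul_comm] at h ⊢
  exact h

lemma norm_two_mul_mul_one_sub_pow_div_le {x : ℝ} (hx : x ∈ Icc (0 : ℝ) 1) (k : ℕ) :
    ‖(2 * x * (1 - x)) ^ (k + 1) / (2 * ((k : ℝ) + 1))‖ ≤ (1 / 2) ^ (k + 1) := by
  obtain ⟨hy0, hy1⟩ := two_mul_mul_one_sub_mem_Icc hx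
  rw [Real.norm_of_nonneg (by positivity)]
  calc (2 * x * (1 - x)) ^ (k + 1) / (2 * ((k : ℝ) + 1)) ≤ (2 * x * (1 - x)) ^ (k + 1) :=
        div_le_self (by positivity) (by linarith [k.cast_nonneg (α := ℝ)])
    _ ≤ (1 / 2) ^ (k + 1) := by gcongr

lemma hasSum_integral_two_mul_mul_one_sub_pow_div :
    HasSum (fun k : ℕ => ∫ x in (0 : ℝ)..1, (2 * x * (1 - x)) ^ (k + 1) / (2 * ((k : ℝ) + 1)))
      (∫ x in (0 : ℝ)..1, -log (1 - 2 * x * (1 - x)) / 2) := by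
  have hIcc {x : ℝ} (hx : x ∈ uIoc (0 : ℝ) 1) : x ∈ Icc (0 : ℝ) 1 := by
    rw [uIoc_of_le zero_le_one] at hx
    exact Ioc_subset_Icc_self hx
  refine hasSum_integral_of_dominated_convergence (fun k _ => (1 / 2 : ℝ) ^ (k + 1))
    (fun k => (by fun_prop : Continuous _).aestronglyMeasurable)
    (fun k => .of_forall fun x hx => norm_two_mul_mul_one_sub_pow_div_le (hIcc hx) k)
    (.of_forall fun _ _ => (summable_nat_add_iff 1).mpr summable_geometric_two)
    intervalIntegrable_const
    (.of_forall fun x hx => hasSum_two_mul_mul_one_sub_pow_div (hIcc hx))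

lemma one_sub_two_mul_mul_one_sub_pos (x : ℝ) : 0 < 1 - 2 * x * (1 - x) := by
  nlinarith [sq_nonneg (2 * x - 1)]

lemma hasDerivAt_antideriv_log_one_sub_two_mul_mul_one_sub (x : ℝ) :
    HasDerivAt
      (fun x => x - (x - 1 / 2) / 2 * log (1 - 2 * x * (1 - x)) - arctan (2 * x - 1) / 2)
      (-log (1 - 2 * x * (1 - x)) / 2) x := by
  have hq := one_sub_two_mul_mul_one_sub_pos x
  have hlog : HasDerivAt (fun x => log (1 - 2 * x * (1 - x)))
      ((4 * x - 2) / (1 - 2 * x * (1 - x))) x := by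
    refine HasDerivAt.log ?_ hq.ne'
    have h := ((hasDerivAt_id' x).const_mul 2).fun_mul ((hasDerivAt_id' x).const_sub 1)
    refine (h.const_sub 1).congr_deriv ?_
    ring
  have harctan := ((hasDerivAt_id' x).const_mul 2 |>.sub_const 1).arctan
  have hprod := (((hasDerivAt_id' x).sub_const (1 / 2)).div_const 2).mul hlog
  refine (((hasDerivAt_id' x).sub hprod).sub (harctan.div_const 2)).congr_deriv ?_
  rw [show 1 + (2 * x - 1) ^ 2 = 2 * (1 - 2 * x * (1 - x)) by ring]
  field_simp
  ring

lemma integral_neg_log_one_sub_two_mul_mul_one_sub :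
    ∫ x in (0 : ℝ)..1, -log (1 - 2 * x * (1 - x)) / 2 = 1 - π / 4 := by
  rw [integral_eq_sub_of_hasDerivAt
    (fun x _ => hasDerivAt_antideriv_log_one_sub_two_mul_mul_one_sub x)]
  · norm_num
    ring
  · exact ((continuous_const.sub (by fun_prop)).log
      fun x => (one_sub_two_mul_mul_one_sub_pos x).ne').neg.div_const 2 |>.intervalIntegrable _ _

theorem inv_central_binom_series_pi :
    HasSum
      (fun k : ℕ =>
        (2 : ℝ) ^ (k + 1) /
          ((Nat.choose (2 * (k + 1)) (k + 1) : ℝ) * (2 * ((k : ℝ) + 1)) *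
            (2 * ((k : ℝ) + 1) + 1)))
      (1 - Real.pi / 4) := by
  have hterm (k : ℕ) : (2 : ℝ) ^ (k + 1) /
      ((Nat.choose (2 * (k + 1)) (k + 1) : ℝ) * (2 * ((k : ℝ) + 1)) * (2 * ((k : ℝ) + 1) + 1))
        = ∫ x in (0 : ℝ)..1, (2 * x * (1 - x)) ^ (k + 1) / (2 * ((k : ℝ) + 1)) := by
    rw [intervalIntegral.integral_div, integral_two_mul_mul_one_sub_pow]
    push_cast
    field_simp
  simp_rw [hterm, ← integral_neg_log_one_sub_two_mul_mul_one_sub]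
  exact hasSum_integral_two_mul_mul_one_sub_pow_div
end

section
/- The infinite series Σ_{k=0}^{∞} binom(2k,k) / (8^k · (2k+3)) converges and equals (√2/4)·(π - 2). -/
/-!
Instantiating the binomial series `(1 + y) ^ (-1/2)` at `y = -4x` gives
`∑ centralBinom n * x ^ n = 1 / √(1 - 4x)` for `|x| < 1/4`. Putting `x = t² / 8` and multiplying by
`t²`, the `k`-th term of the series is `∫₀¹ centralBinom k / 8 ^ k * t ^ (2k + 2) dt`, so the sum is
`∫₀¹ t² / √(1 - t²/2) dt`, which has the antiderivative `√2 arcsin (t / √2) - t √(1 - t²/2)`.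
-/

open Nat Polynomial Real

theorem descPochhammer_smeval_neg_half_mul_neg_four_pow (n : ℕ) :
    (descPochhammer ℤ n).smeval (-1 / 2 : ℝ) * (-4) ^ n = n ! * centralBinom n := by
  induction n with
  | zero => simp
  | succ n ih =>
    have h : ((n : ℝ) + 1) * centralBinom (n + 1) = 2 * (2 * n + 1) * centralBinom n := by
      exact_mod_cast succ_mul_centralBinom_succ n
    rw [descPochhammer_succ_right, smeval_mul, smeval_sub, smeval_X, smeval_natCast, factorial_succ]
    push_cast
    linear_combination (2 * (2 * n + 1) : ℝ) * ih - (n ! : ℝ) * h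

theorem Ring.choose_neg_half_mul_neg_four_pow (n : ℕ) :
    Ring.choose (-1 / 2 : ℝ) n * (-4) ^ n = centralBinom n := by
  rw [Ring.choose_eq_smul, smul_eq_mul, mul_assoc, descPochhammer_smeval_neg_half_mul_neg_four_pow,
    inv_mul_cancel_left₀ (by positivity)]

theorem hasSum_centralBinom_mul_pow {x : ℝ} (hx : |x| < 1 / 4) :
    HasSum (fun n ↦ (centralBinom n : ℝ) * x ^ n) (√(1 - 4 * x))⁻¹ := by
  have hy : -4 * x ∈ Metric.eball (0 : ℝ) 1 := by
    rw [← ENNReal.ofReal_one, Metric.eball_ofReal, mem_ball_zero_iff, norm_mul, norm_eq_abs]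
    norm_num
    linarith
  have h := Real.one_add_rpow_hasFPowerSeriesOnBall_zero (a := -1 / 2) |>.hasSum hy
  simp only [FormalMultilinearSeries.apply_eq_pow_smul_coeff, binomialSeries,
    FormalMultilinearSeries.coeff_ofScalars, smul_eq_mul, zero_add] at h
  have hterm (n : ℕ) : (-4 * x) ^ n * Ring.choose (-1 / 2 : ℝ) n = centralBinom n * x ^ n := by
    rw [← Ring.choose_neg_half_mul_neg_four_pow]
    ring
  have hsum : (1 + -4 * x) ^ (-1 / 2 : ℝ) = (√(1 - 4 * x))⁻¹ := by
    rw [Real.sqrt_eq_rpow, ← Real.rpow_neg (by linarith [abs_lt.1 hx])]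
    ring_nf
  simpa only [hterm, hsum] using h

theorem hasSum_centralBinom_div_eight_pow_mul_pow {t : ℝ} (ht : |t| ≤ 1) :
    HasSum (fun n ↦ centralBinom n / 8 ^ n * t ^ (2 * n + 2)) (t ^ 2 / √(1 - t ^ 2 / 2)) := by
  have hx : |t ^ 2 / 8| < 1 / 4 := by
    rw [abs_div, abs_pow, abs_of_pos (by norm_num : (0 : ℝ) < 8)]
    nlinarith [abs_nonneg t]
  have hterm (n : ℕ) : t ^ 2 * (centralBinom n * (t ^ 2 / 8) ^ n) =
      centralBinom n / 8 ^ n * t ^ (2 * n + 2) := by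
    rw [div_pow, pow_add, pow_mul]
    ring
  have hsum : t ^ 2 * (√(1 - 4 * (t ^ 2 / 8)))⁻¹ = t ^ 2 / √(1 - t ^ 2 / 2) := by
    ring_nf
  rw [← funext hterm, ← hsum]
  exact (hasSum_centralBinom_mul_pow hx).mul_left (t ^ 2)

theorem norm_centralBinom_div_eight_pow_mul_pow_le (n : ℕ) {t : ℝ} (ht : |t| ≤ 1) :
    ‖centralBinom n / 8 ^ n * t ^ (2 * n + 2)‖ ≤ (1 / 2) ^ n := by
  have hcoeff : (centralBinom n : ℝ) / 8 ^ n ≤ (1 / 2) ^ n := by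
    rw [div_le_iff₀ (by positivity), ← mul_pow]
    norm_num
    exact_mod_cast centralBinom_le_four_pow n
  rw [norm_mul, norm_pow, norm_of_nonneg (by positivity), norm_eq_abs]
  exact (mul_le_of_le_one_right (by positivity) (pow_le_one₀ (abs_nonneg t) ht)).trans hcoeff

theorem integral_centralBinom_div_eight_pow_mul_pow (n : ℕ) :
    ∫ t in (0 : ℝ)..1, centralBinom n / 8 ^ n * t ^ (2 * n + 2) =
      (2 * n).choose n / (8 ^ n * (2 * n + 3)) := by
  rw [intervalIntegral.integral_const_mul, integral_pow, centralBinom_eq_two_mul_choose]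
  push_cast
  field_simp
  ring

theorem hasDerivAt_sqrt_two_mul_arcsin_sub {t : ℝ} (ht : t ^ 2 < 2) :
    HasDerivAt (fun s ↦ √2 * arcsin (s / √2) - s * √(1 - s ^ 2 / 2))
      (t ^ 2 / √(1 - t ^ 2 / 2)) t := by
  have h2 : √2 ^ 2 = 2 := sq_sqrt zero_le_two
  have hpos : 0 < 1 - t ^ 2 / 2 := by linarith
  have hsq : (t / √2) ^ 2 < 1 := by rw [div_pow, h2]; linarith
  have hlt := abs_lt.1 (sq_lt_one_iff_abs_lt_one _ |>.1 hsq)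
  have harcsin := (hasDerivAt_arcsin hlt.1.ne' hlt.2.ne).comp t ((hasDerivAt_id t).div_const √2)
  have hroot := ((hasDerivAt_pow 2 t).div_const 2).const_sub 1 |>.sqrt hpos.ne'
  refine ((harcsin.const_mul √2).sub ((hasDerivAt_id t).mul hroot)).congr_deriv ?_
  rw [div_pow, h2]
  set r := √(1 - t ^ 2 / 2)
  have hr0 : r ≠ 0 := (sqrt_pos.2 hpos).ne'
  have hr2 : r ^ 2 = 1 - t ^ 2 / 2 := sq_sqrt hpos.le
  simp only [id, Nat.cast_ofNat]
  field_simp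
  linear_combination (-2) * hr2

theorem integral_sq_div_sqrt_one_sub_sq_div_two :
    ∫ t in (0 : ℝ)..1, t ^ 2 / √(1 - t ^ 2 / 2) = √2 / 4 * (π - 2) := by
  have hsq (t : ℝ) (ht : t ∈ Set.uIcc (0 : ℝ) 1) : t ^ 2 < 2 := by
    rw [Set.uIcc_of_le zero_le_one] at ht
    nlinarith [ht.1, ht.2]
  have hcont : ContinuousOn (fun t : ℝ ↦ t ^ 2 / √(1 - t ^ 2 / 2)) (Set.uIcc 0 1) :=
    .div (by fun_prop) (by fun_prop) fun t ht ↦ sqrt_ne_zero'.2 (by linarith [hsq t ht])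
  rw [intervalIntegral.integral_eq_sub_of_hasDerivAt
    (fun t ht ↦ hasDerivAt_sqrt_two_mul_arcsin_sub (hsq t ht)) hcont.intervalIntegrable]
  have harcsin : arcsin (1 / √2) = π / 4 := by
    rw [← sqrt_div_self', ← sin_pi_div_four, arcsin_sin] <;> linarith [pi_pos]
  have hhalf : √(1 - 1 ^ 2 / 2 : ℝ) = √2 / 2 := by
    rw [sqrt_div_self', one_div, ← sqrt_inv]; norm_num
  rw [harcsin, hhalf, zero_div, arcsin_zero]
  ring

theorem central_binom_series_pi_minus_two :
    HasSum
      (fun k : ℕ =>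
        (Nat.choose (2 * k) k : ℝ) / (8 ^ k * (2 * (k : ℝ) + 3)))
      (Real.sqrt 2 / 4 * (Real.pi - 2)) := by
  have hmem {t : ℝ} (ht : t ∈ Set.uIoc (0 : ℝ) 1) : |t| ≤ 1 := by
    rw [Set.uIoc_of_le zero_le_one] at ht
    exact abs_le.2 ⟨by linarith [ht.1], ht.2⟩
  have hcont (n : ℕ) : Continuous fun t : ℝ ↦ centralBinom n / 8 ^ n * t ^ (2 * n + 2) := by
    fun_prop
  have h := intervalIntegral.hasSum_integral_of_dominated_convergence (μ := MeasureTheory.volume)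
    (fun n _ ↦ (1 / 2 : ℝ) ^ n) (fun n ↦ (hcont n).aestronglyMeasurable)
    (fun n ↦ .of_forall fun t ht ↦ norm_centralBinom_div_eight_pow_mul_pow_le n (hmem ht))
    (.of_forall fun t _ ↦ summable_geometric_of_lt_one (by norm_num) (by norm_num))
    intervalIntegrable_const
    (.of_forall fun t ht ↦ hasSum_centralBinom_div_eight_pow_mul_pow (hmem ht))
  simpa only [integral_centralBinom_div_eight_pow_mul_pow,
    integral_sq_div_sqrt_one_sub_sq_div_two] using h
end
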